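/- For all real numbers P ≥ 0 and S ≥ 0 there exists α ∈ [0, 1] such that (1/2)·log₂(1+P/2) + (1/2)·log₂(1 + αP/(2 + (1−α)P + 2S)) + (1/4)·log₂(1 + (1−α)P/2) ≥ R_in(P,S). -/

import Mathlib

/-!
With `α = 1` the rate is `Rin` itself when `S ≤ 1`, and with `α = 0` its second term vanishes
while the other two exceed `(3/4)·log₂(1 + P/2) - 1`. For `1 < S < P + 1` choose `α` so that the
power `(1 - α)·P` left to the last term equals `S - 1`; the rate then involves
`log₂((2S + P + 2)/(3S + 1))` and `log₂((S + 1)/2)`, which fall short of the terms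
`log₂((S + P + 2)/(2S))` and `log₂ S` of `Rin` by at most one bit each, since their arguments
differ by at most a factor `2`.
-/

open Real

/-- The piecewise closed-form inner-bound expression of Lemma 4 (in bits),
with `S = Q·sin²Δ` the effective interference power. -/
noncomputable def Rin (P S : ℝ) : ℝ :=
  if S ≤ 1 then (1 / 2) * logb 2 (1 + P / 2) + (1 / 2) * logb 2 (1 + P / (2 + 2 * S))
  else if P + 1 ≤ S then (3 / 4) * logb 2 (1 + P / 2) - 1
  else (1 / 2) * logb 2 (1 + P / 2) + (1 / 2) * logb 2 (1 / 2 + (P + 2) / (2 * S))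
      + (1 / 4) * logb 2 S - 5 / 4

noncomputable def binningRate (P S α : ℝ) : ℝ :=
  (1 / 2) * logb 2 (1 + P / 2) + (1 / 2) * logb 2 (1 + α * P / (2 + (1 - α) * P + 2 * S))
    + (1 / 4) * logb 2 (1 + (1 - α) * P / 2)

lemma logb_two_le_one_add_logb_two {x y : ℝ} (hx : 0 < x) (hy : 0 < y) (h : x ≤ 2 * y) :
    logb 2 x ≤ 1 + logb 2 y := by
  calc logb 2 x ≤ logb 2 (2 * y) := logb_le_logb_of_le one_lt_two hx h
    _ = 1 + logb 2 y := by rw [logb_mul two_ne_zero hy.ne', logb_self_eq_one one_lt_two]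

lemma binningRate_one (P S : ℝ) :
    binningRate P S 1 = (1 / 2) * logb 2 (1 + P / 2) + (1 / 2) * logb 2 (1 + P / (2 + 2 * S)) := by
  norm_num [binningRate]

lemma binningRate_zero (P S : ℝ) :
    binningRate P S 0 = (3 / 4) * logb 2 (1 + P / 2) := by
  norm_num [binningRate]
  ring

lemma binningRate_of_sub_mul_eq {P S α : ℝ} (hS : 0 < S) (hα : (1 - α) * P = S - 1) :
    binningRate P S α = (1 / 2) * logb 2 (1 + P / 2)
      + (1 / 2) * logb 2 ((2 * S + P + 2) / (3 * S + 1)) + (1 / 4) * logb 2 ((S + 1) / 2) := by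
  have hαP : α * P = P + 1 - S := by linear_combination -hα
  have hden : 2 + (1 - α) * P + 2 * S = 3 * S + 1 := by rw [hα]; ring
  have hsecond : 1 + α * P / (3 * S + 1) = (2 * S + P + 2) / (3 * S + 1) := by
    rw [hαP]; field_simp; ring
  rw [binningRate, hden, hsecond, hα]
  ring_nf

lemma Rin_le_binningRate_of_sub_mul_eq {P S α : ℝ} (hS : 1 < S) (hSP : S < P + 1)
    (hα : (1 - α) * P = S - 1) : Rin P S ≤ binningRate P S α := by
  have hS0 : 0 < S := by linarith
  have hP : 0 < P := by linarith
  have hhalf : (1 : ℝ) / 2 + (P + 2) / (2 * S) = (S + P + 2) / (2 * S) := by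
    field_simp; ring
  rw [Rin, if_neg hS.not_ge, if_neg hSP.not_ge, binningRate_of_sub_mul_eq hS0 hα, hhalf]
  have hratio : (S + P + 2) / (2 * S) ≤ 2 * ((2 * S + P + 2) / (3 * S + 1)) := by
    rw [← mul_div_assoc, div_le_div_iff₀ (by positivity) (by positivity)]
    nlinarith
  have hsecond := logb_two_le_one_add_logb_two (by positivity) (by positivity) hratio
  have hthird := logb_two_le_one_add_logb_two (x := S) (y := (S + 1) / 2) hS0 (by positivity)
    (by linarith)
  linarith

theorem stmt_2_general (P S : ℝ) :
    ∃ α ∈ Set.Icc (0 : ℝ) 1,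
      Rin P S ≤ (1 / 2) * logb 2 (1 + P / 2)
        + (1 / 2) * logb 2 (1 + α * P / (2 + (1 - α) * P + 2 * S))
        + (1 / 4) * logb 2 (1 + (1 - α) * P / 2) := by
  change ∃ α ∈ Set.Icc (0 : ℝ) 1, Rin P S ≤ binningRate P S α
  by_cases hS : S ≤ 1
  · exact ⟨1, by norm_num, by rw [Rin, if_pos hS, binningRate_one]⟩
  by_cases hSP : P + 1 ≤ S
  · refine ⟨0, by norm_num, ?_⟩
    rw [Rin, if_pos hSP, if_neg hS, binningRate_zero]
    linarith
  push Not at hS hSP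
  have hP : 0 < P := by linarith
  refine ⟨1 - (S - 1) / P, ⟨?_, ?_⟩, Rin_le_binningRate_of_sub_mul_eq hS hSP ?_⟩
  · rw [sub_nonneg, div_le_one hP]; linarith
  · linarith [div_pos (by linarith : 0 < S - 1) hP]
  · field_simp; ring

/-- Lemma 4: the achievable rate with `β = 1/2`, optimized over `α ∈ [0,1]`,
dominates the closed-form piecewise expression `Rin`. -/
theorem stmt_2 (P S : ℝ) (hP : 0 ≤ P) (hS : 0 ≤ S) :
    ∃ α ∈ Set.Icc (0 : ℝ) 1,
      Rin P S ≤ (1 / 2) * logb 2 (1 + P / 2)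
        + (1 / 2) * logb 2 (1 + α * P / (2 + (1 - α) * P + 2 * S))
        + (1 / 4) * logb 2 (1 + (1 - α) * P / 2) :=
  stmt_2_general P S
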